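/- arXiv:2304.09676 — 4 statements merged into one kernel-verified Lean document; each statement's English description precedes it below -/
import Mathlib

section
/- Let n be a natural number and define the polynomial function G_n : ℂ → ℂ by G_n(x) = ∑_{k=0}^{n} ((2n-k)!/((n-k)! · k!)) x^k. Then the function h_n(x) = e^{-x} G_n(x) - G_n(-x) has vanishing derivatives at 0 up to order 2n, i.e., the k-th iterated derivative of h_n at x = 0 equals 0 for every k with 0 ≤ k ≤ 2n. (This is the defining property of the [n/n] Padé approximant G_n(-x)/G_n(x) of e^{-x}.) -/
/-!
By the Leibniz rule the `k`-th derivative of `e^{-x} G_n(x)` at `0` is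
`∑ᵢ C(k,i) (-1)^i G_n^{(k-i)}(0)`, that of `G_n(-x)` is `(-1)^k G_n^{(k)}(0)`, and
`G_n^{(j)}(0) = n! C(2n-j, n)` for `j ≤ 2n`. With `m = 2n - k` the claim becomes
`∑ᵢ (-1)^i C(k,i) C(m+i, n) = (-1)^k C(m, n)`. The left side is the coefficient of `X^n` in
`(1+X)^m (1 - (1+X))^k = (-X)^k (1+X)^m`, i.e. `(-1)^k C(m, n-k)` if `k ≤ n` and `0` otherwise;
as `m + k = 2n`, this is `(-1)^k C(m, n)` by symmetry, resp. because `m < n`.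
-/

open Complex

/-- The (scaled) denominator polynomial of the `[n/n]` diagonal Padé approximant of
`e^{-x}`: `G_n(x) = ∑_{k=0}^{n} ((2n-k)!/((n-k)!·k!)) x^k = ((2n)!/n!)·₁F₁(-n;-2n;x)`. -/
noncomputable def padeG (n : ℕ) (x : ℂ) : ℂ :=
  ∑ k ∈ Finset.range (n + 1),
    ((Nat.factorial (2 * n - k) : ℂ) /
      ((Nat.factorial (n - k) : ℂ) * (Nat.factorial k : ℂ))) * x ^ k

open Finset Polynomial Nat

theorem sum_range_neg_one_pow_mul_choose_mul_choose_add (k m n : ℕ) :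
    ∑ i ∈ range (k + 1), (-1 : ℤ) ^ i * k.choose i * (m + i).choose n =
      (-1) ^ k * if k ≤ n then (m.choose (n - k) : ℤ) else 0 := by
  have hpoly : ∑ i ∈ range (k + 1), C ((-1 : ℤ) ^ i * k.choose i) * (X + 1) ^ (m + i) =
      C ((-1) ^ k) * (X ^ k * (X + 1) ^ m) :=
    calc _ = (X + 1) ^ m *
          ∑ i ∈ range (k + 1), (-(X + 1)) ^ i * 1 ^ (k - i) * (k.choose i : ℤ[X]) := by
          rw [mul_sum]
          refine sum_congr rfl fun i _ => ?_
          simp only [C_mul, C_pow, map_neg, map_one, C_eq_natCast, one_pow,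
            neg_pow (X + 1 : ℤ[X]), pow_add]
          ring
      _ = (X + 1) ^ m * (-(X + 1) + 1) ^ k := by rw [← add_pow]
      _ = C ((-1) ^ k) * (X ^ k * (X + 1) ^ m) := by
          simp only [C_pow, map_neg, map_one]
          ring
  simpa only [finsetSum_coeff, coeff_C_mul, coeff_X_add_one_pow, coeff_X_pow_mul', add_comm m]
    using congrArg (coeff · n) hpoly

theorem sum_range_neg_one_pow_mul_choose_mul_choose_add_of_add_eq_two_mul {k m n : ℕ}
    (h : m + k = 2 * n) :
    ∑ i ∈ range (k + 1), (-1 : ℤ) ^ i * k.choose i * (m + i).choose n =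
      (-1) ^ k * m.choose n := by
  rw [sum_range_neg_one_pow_mul_choose_mul_choose_add]
  split_ifs with hkn
  · rw [choose_symm_of_eq_add (by omega : m = (n - k) + n)]
  · rw [choose_eq_zero_of_lt (by omega : m < n), cast_zero]

theorem iteratedDeriv_sum_range_mul_pow_zero {𝕜 : Type*} [NontriviallyNormedField 𝕜]
    (a : ℕ → 𝕜) (N j : ℕ) :
    iteratedDeriv j (fun x => ∑ k ∈ range N, a k * x ^ k) 0 = if j < N then j ! * a j else 0 := by
  rw [iteratedDeriv_fun_sum fun k _ => by fun_prop]
  simp only [iteratedDeriv_const_mul_field, iteratedDeriv_fun_pow_zero, Nat.cast_ite, cast_zero,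
    mul_ite, mul_zero, sum_ite_eq, mem_range, mul_comm]

theorem iteratedDeriv_cexp_neg (k : ℕ) (x : ℂ) :
    iteratedDeriv k (fun x => Complex.exp (-x)) x = (-1) ^ k * Complex.exp (-x) := by
  rw [iteratedDeriv_comp_neg, iteratedDeriv_eq_iterate, Complex.iter_deriv_exp, smul_eq_mul]

@[fun_prop]
theorem contDiff_padeG (n : ℕ) {m : WithTop ℕ∞} : ContDiff ℂ m (padeG n) := by
  unfold padeG
  fun_prop

theorem iteratedDeriv_padeG_zero {n j : ℕ} (hj : j ≤ 2 * n) :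
    iteratedDeriv j (padeG n) 0 = n ! * (2 * n - j).choose n := by
  unfold padeG
  rw [iteratedDeriv_sum_range_mul_pow_zero]
  split_ifs with hjn
  · rw [← choose_mul_factorial_mul_factorial (by omega : n ≤ 2 * n - j),
      show 2 * n - j - n = n - j by omega]
    have := factorial_ne_zero j
    have := factorial_ne_zero (n - j)
    push_cast
    field_simp
  · rw [choose_eq_zero_of_lt (by omega : 2 * n - j < n), cast_zero, mul_zero]

/-- The function `h_n(x) = e^{-x} G_n(x) - G_n(-x)` has vanishing derivatives at `0` up to
order `2n`: this is the defining property of the `[n/n]` Padé approximant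
`G_n(-x)/G_n(x)` of `e^{-x}`. -/
theorem iteratedDeriv_pade_defect_eq_zero (n : ℕ) :
    ∀ k : ℕ, k ≤ 2 * n →
      iteratedDeriv k (fun x : ℂ => Complex.exp (-x) * padeG n x - padeG n (-x)) 0 = 0 := by
  intro k hk
  have hsum : ∑ i ∈ range (k + 1), (-1 : ℂ) ^ i * k.choose i * (2 * n - k + i).choose n =
      (-1) ^ k * (2 * n - k).choose n := by
    exact_mod_cast sum_range_neg_one_pow_mul_choose_mul_choose_add_of_add_eq_two_mul
      (by omega : 2 * n - k + k = 2 * n)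
  rw [iteratedDeriv_fun_sub (by fun_prop) (by fun_prop),
    iteratedDeriv_fun_mul (by fun_prop) (by fun_prop), iteratedDeriv_comp_neg, neg_zero,
    iteratedDeriv_padeG_zero hk, sub_eq_zero, smul_eq_mul, mul_left_comm, ← hsum, mul_sum]
  refine sum_congr rfl fun i hi => ?_
  have hik : i ≤ k := Nat.lt_succ_iff.mp (mem_range.mp hi)
  rw [iteratedDeriv_cexp_neg, neg_zero, Complex.exp_zero, iteratedDeriv_padeG_zero (by omega),
    show 2 * n - (k - i) = 2 * n - k + i by omega]
  ring
end

section
/- Let n ≥ 1 be a natural number, define G_n : ℂ → ℂ by G_n(x) = ∑_{k=0}^{n} ((2n-k)!/((n-k)! · k!)) x^k, and define the rational approximation E_n(z) = -(1/(2iz)) · (G_n(-iz)² - G_n(iz)²)/(G_n(iz) · G_n(-iz)) for z ≠ 0. Then the approximation error Ŝ_n(z) = sinc z - E_n(z) satisfies lim_{z→0, z≠0} Ŝ_n(z)/z^{2n} = (n!)²/((2n)!(2n+1)!); in particular the error vanishes to order 2n at z = 0. -/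
open Complex Filter

/-- The unnormalized sinc function on the complex plane. -/
noncomputable def csinc (z : ℂ) : ℂ := if z = 0 then 1 else Complex.sin z / z

/-- The rational approximation `E_n` of the sinc function obtained by substituting the
`[n/n]` Padé approximant of the exponential into `sinc z = (e^{-iz} - e^{iz})/(-2iz)`. -/
noncomputable def sincPadeE (n : ℕ) (z : ℂ) : ℂ :=
  -(1 / (2 * I * z)) *
    ((padeG n (-I * z)) ^ 2 - (padeG n (I * z)) ^ 2) / (padeG n (I * z) * padeG n (-I * z))

/-!
Write `G_n = n! ∑_{k ≤ 2n} c_k x^k` with `c_k = C(2n-k, n)/k!` (which vanishes for `n < k`).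
Reading off the coefficient of `X^n` in `X^j (X+1)^(2n-j) = ∑_k (-1)^k C(j,k) (X+1)^(2n-k)` gives
`∑_k (-1)^k C(j,k) C(2n-k,n) = C(2n-j,n)` for `j ≤ 2n`: the part of degree `≤ 2n` of
`G_n(-w) e^w` is exactly `G_n(w)`, while at degree `2n+1` the same sum is `(-1)^n`. Hence
`R(w) = (e^w G_n(-w) - G_n(w)) / w^(2n+1) → (-1)^n n!/(2n+1)!`. Writing `w = iz`,
`sinc z - E_n(z) = ((e^w - G_n(w)/G_n(-w)) - (e^{-w} - G_n(-w)/G_n(w))) / (2w)`, so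
`(sinc z - E_n(z)) / z^(2n) = (-1)^n/2 · (R(w)/G_n(-w) + R(-w)/G_n(w)) → (-1)^n R(0)/G_n(0)`,
and `G_n(0) = (2n)!/n!`.
-/

open Finset
open scoped Nat Topology

section Binomial

open Polynomial

theorem X_pow_mul_X_add_one_pow_eq_sum {j m : ℕ} (hj : j ≤ m) :
    (X : ℤ[X]) ^ j * (X + 1) ^ (m - j) =
      ∑ k ∈ range (j + 1), C ((-1) ^ k * (j.choose k : ℤ)) * (X + 1) ^ (m - k) := by
  have hbin := add_pow (-1 : ℤ[X]) (X + 1) j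
  rw [show (-1 : ℤ[X]) + (X + 1) = X by ring] at hbin
  rw [hbin, sum_mul]
  refine sum_congr rfl fun k hk => ?_
  rw [mem_range] at hk
  rw [show m - k = (j - k) + (m - j) by omega, pow_add]
  simp only [map_mul, map_pow, map_neg, map_one, map_natCast]
  ring

theorem sum_neg_one_pow_mul_choose_mul_choose {j m : ℕ} (n : ℕ) (hj : j ≤ m) :
    ∑ k ∈ range (j + 1), (-1) ^ k * (j.choose k : ℤ) * (m - k).choose n =
      if j ≤ n then ((m - j).choose (n - j) : ℤ) else 0 := by
  have h := congrArg (coeff · n) (X_pow_mul_X_add_one_pow_eq_sum hj)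
  simp only [coeff_X_pow_mul', finsetSum_coeff, coeff_C_mul, coeff_X_add_one_pow] at h
  rw [← h]

theorem sum_neg_one_pow_mul_choose_two_mul_add_one_mul_choose (n : ℕ) :
    ∑ k ∈ range (2 * n + 1), (-1) ^ k * ((2 * n + 1).choose k : ℤ) * (2 * n - k).choose n =
      (-1) ^ n := by
  set S : ℤ[X] := ∑ k ∈ range (2 * n + 1), C ((-1) ^ k * ((2 * n + 1).choose k : ℤ)) *
    (X + 1) ^ (2 * n - k)
  have hodd : Odd (2 * n + 1) := odd_two_mul_add_one n
  have hS : (X + 1) * S = X ^ (2 * n + 1) + 1 := by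
    have hbin := add_pow (-1 : ℤ[X]) (X + 1) (2 * n + 1)
    rw [show (-1 : ℤ[X]) + (X + 1) = X by ring, sum_range_succ, Nat.sub_self, pow_zero,
      Nat.choose_self, hodd.neg_one_pow] at hbin
    rw [mul_sum]
    calc ∑ k ∈ range (2 * n + 1), (X + 1) * (C ((-1) ^ k * ((2 * n + 1).choose k : ℤ)) *
          (X + 1) ^ (2 * n - k))
        = ∑ k ∈ range (2 * n + 1), (-1) ^ k * (X + 1) ^ (2 * n + 1 - k) *
          ((2 * n + 1).choose k : ℤ[X]) := by
          refine sum_congr rfl fun k hk => ?_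
          rw [mem_range] at hk
          rw [show 2 * n + 1 - k = 2 * n - k + 1 by omega, pow_succ]
          simp only [map_mul, map_pow, map_neg, map_one, map_natCast]
          ring
      _ = X ^ (2 * n + 1) + 1 := by linear_combination -hbin
  have hgeom : (X + 1) * ∑ i ∈ range (2 * n + 1), C ((-1) ^ i) * X ^ i = X ^ (2 * n + 1) + 1 := by
    have h := mul_neg_geom_sum (-X : ℤ[X]) (2 * n + 1)
    simp only [neg_pow (X : ℤ[X]), hodd.neg_one_pow] at h
    simp only [map_pow, map_neg, map_one]
    linear_combination h
  have h := congrArg (coeff · n) (mul_left_cancel₀ (X_add_C_ne_zero 1) (hS.trans hgeom.symm))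
  simp only [S, finsetSum_coeff, coeff_C_mul, coeff_X_add_one_pow, coeff_X_pow] at h
  simpa [show n ≤ 2 * n by omega] using h

end Binomial

noncomputable def padeCoeff (n k : ℕ) : ℂ := ((2 * n - k).choose n : ℂ) / k !

theorem padeCoeff_div_factorial_sub {n j k : ℕ} (hkj : k ≤ j) :
    padeCoeff n k / (j - k)! = ((j.choose k * (2 * n - k).choose n : ℕ) : ℂ) / j ! := by
  rw [Nat.cast_mul, Nat.cast_choose ℂ hkj, padeCoeff]
  field_simp [Nat.cast_ne_zero.2 (Nat.factorial_ne_zero j)]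

theorem sum_neg_one_pow_mul_padeCoeff_div_factorial {n j : ℕ} (hj : j ≤ 2 * n) :
    ∑ k ∈ range (j + 1), (-1) ^ k * padeCoeff n k / (j - k)! = padeCoeff n j := by
  have hterm : ∀ k ∈ range (j + 1), (-1) ^ k * padeCoeff n k / (j - k)! =
      (((-1) ^ k * (j.choose k : ℤ) * (2 * n - k).choose n : ℤ) : ℂ) / j ! := by
    intro k hk
    rw [mul_div_assoc, padeCoeff_div_factorial_sub (Nat.lt_succ_iff.1 (mem_range.1 hk))]
    push_cast
    ring
  rw [sum_congr rfl hterm, ← sum_div, ← Int.cast_sum, sum_neg_one_pow_mul_choose_mul_choose n hj,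
    padeCoeff]
  split_ifs with hjn
  · rw [Nat.choose_symm_of_eq_add (by omega : 2 * n - j = (n - j) + n)]
    simp
  · rw [Nat.choose_eq_zero_of_lt (by omega : 2 * n - j < n)]
    simp

theorem sum_neg_one_pow_mul_padeCoeff_div_factorial_two_mul_add_one (n : ℕ) :
    ∑ k ∈ range (2 * n + 1), (-1) ^ k * padeCoeff n k / (2 * n + 1 - k)! =
      (-1) ^ n / (2 * n + 1)! := by
  have hterm : ∀ k ∈ range (2 * n + 1), (-1) ^ k * padeCoeff n k / (2 * n + 1 - k)! =
      (((-1) ^ k * ((2 * n + 1).choose k : ℤ) * (2 * n - k).choose n : ℤ) : ℂ) / (2 * n + 1)! := by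
    intro k hk
    rw [mul_div_assoc, padeCoeff_div_factorial_sub (by simp at hk; omega)]
    push_cast
    ring
  rw [sum_congr rfl hterm, ← sum_div, ← Int.cast_sum,
    sum_neg_one_pow_mul_choose_two_mul_add_one_mul_choose]
  push_cast
  rfl

theorem padeG_eq_sum_padeCoeff (n : ℕ) (x : ℂ) :
    padeG n x = n ! * ∑ k ∈ range (2 * n + 1), padeCoeff n k * x ^ k := by
  rw [padeG, mul_sum, ← sum_subset (range_subset_range.2 (by omega : n + 1 ≤ 2 * n + 1))]
  · refine sum_congr rfl fun k hk => ?_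
    have hkn : k ≤ n := Nat.lt_succ_iff.1 (mem_range.1 hk)
    rw [padeCoeff, Nat.cast_choose ℂ (by omega : n ≤ 2 * n - k),
      show 2 * n - k - n = n - k by omega]
    field_simp [Nat.cast_ne_zero.2 (Nat.factorial_ne_zero n)]
  · intro k hk hkn
    simp only [mem_range] at hk hkn
    rw [padeCoeff, Nat.choose_eq_zero_of_lt (by omega : 2 * n - k < n)]
    simp

theorem sum_padeCoeff_mul_sum_exp_taylor (n : ℕ) (w : ℂ) :
    ∑ k ∈ range (2 * n + 1), (-1) ^ k * padeCoeff n k * w ^ k *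
        ∑ i ∈ range (2 * n + 1 - k), w ^ i / i ! =
      ∑ j ∈ range (2 * n + 1), padeCoeff n j * w ^ j := by
  simp_rw [mul_sum]
  rw [← sum_range_diag_flip]
  refine sum_congr rfl fun j hj => ?_
  rw [← sum_neg_one_pow_mul_padeCoeff_div_factorial (Nat.lt_succ_iff.1 (mem_range.1 hj)),
    sum_mul]
  refine sum_congr rfl fun k hk => ?_
  rw [← pow_mul_pow_sub w (Nat.lt_succ_iff.1 (mem_range.1 hk))]
  ring

theorem tendsto_exp_sub_sum_div_pow (N : ℕ) :
    Tendsto (fun w : ℂ => (exp w - ∑ i ∈ range N, w ^ i / i !) / w ^ N) (𝓝[≠] 0)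
      (𝓝 (1 / N !)) := by
  rw [tendsto_iff_norm_sub_tendsto_zero]
  have hbound : ∀ᶠ w in 𝓝[≠] (0 : ℂ),
      ‖(exp w - ∑ i ∈ range N, w ^ i / i !) / w ^ N - 1 / (N ! : ℂ)‖ ≤ ‖w‖ * Real.exp ‖w‖ := by
    filter_upwards [self_mem_nhdsWithin] with w (hw : w ≠ 0)
    have hnext : (exp w - ∑ i ∈ range N, w ^ i / i !) / w ^ N - 1 / (N ! : ℂ) =
        (exp w - ∑ i ∈ range (N + 1), w ^ i / i !) / w ^ N := by
      rw [sum_range_succ]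
      field_simp
      ring
    rw [hnext, norm_div, norm_pow, div_le_iff₀ (by positivity)]
    calc _ ≤ ‖w‖ ^ (N + 1) * Real.exp ‖w‖ := Complex.norm_exp_sub_sum_le_norm_mul_exp w (N + 1)
      _ = ‖w‖ * Real.exp ‖w‖ * ‖w‖ ^ N := by ring
  refine squeeze_zero' (Eventually.of_forall fun _ => norm_nonneg _) hbound ?_
  have hcont : Continuous fun w : ℂ => ‖w‖ * Real.exp ‖w‖ := by fun_prop
  simpa using (hcont.tendsto 0).mono_left nhdsWithin_le_nhds

noncomputable def padeRemainder (n : ℕ) (w : ℂ) : ℂ :=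
  (exp w * padeG n (-w) - padeG n w) / w ^ (2 * n + 1)

theorem exp_mul_padeG_neg_sub_padeG (n : ℕ) (w : ℂ) :
    exp w * padeG n (-w) - padeG n w = (n ! : ℂ) * ∑ k ∈ range (2 * n + 1),
      (-1) ^ k * padeCoeff n k * w ^ k * (exp w - ∑ i ∈ range (2 * n + 1 - k), w ^ i / i !) := by
  rw [padeG_eq_sum_padeCoeff n (-w), padeG_eq_sum_padeCoeff n w,
    ← sum_padeCoeff_mul_sum_exp_taylor n w, mul_left_comm, ← mul_sub, mul_sum, ← sum_sub_distrib]
  congr 1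
  refine sum_congr rfl fun k _ => ?_
  rw [neg_pow]
  ring

theorem tendsto_padeRemainder (n : ℕ) :
    Tendsto (padeRemainder n) (𝓝[≠] 0) (𝓝 ((-1) ^ n * n ! / (2 * n + 1)!)) := by
  have hsum : Tendsto (fun w => (n ! : ℂ) * ∑ k ∈ range (2 * n + 1), (-1) ^ k * padeCoeff n k *
      ((exp w - ∑ i ∈ range (2 * n + 1 - k), w ^ i / i !) / w ^ (2 * n + 1 - k))) (𝓝[≠] 0)
      (𝓝 (n ! * ∑ k ∈ range (2 * n + 1), (-1) ^ k * padeCoeff n k * (1 / (2 * n + 1 - k)!))) :=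
    (tendsto_finsetSum _ fun k _ => (tendsto_exp_sub_sum_div_pow _).const_mul _).const_mul _
  simp_rw [mul_one_div, sum_neg_one_pow_mul_padeCoeff_div_factorial_two_mul_add_one] at hsum
  convert hsum.congr' ?_ using 2
  · ring
  filter_upwards [self_mem_nhdsWithin] with w (hw : w ≠ 0)
  rw [padeRemainder, exp_mul_padeG_neg_sub_padeG, mul_div_assoc, sum_div]
  congr 1
  refine sum_congr rfl fun k hk => ?_
  rw [← pow_mul_pow_sub w (by simp at hk; omega : k ≤ 2 * n + 1)]
  field_simp

theorem padeG_zero (n : ℕ) : padeG n 0 = (2 * n)! / n ! := by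
  rw [padeG, sum_eq_single 0 (fun k _ hk => by simp [hk]) (by simp)]
  simp

theorem continuous_padeG (n : ℕ) : Continuous (padeG n) := by
  unfold padeG
  fun_prop

theorem tendsto_const_mul_nhdsNE_zero {M₀ : Type*} [MulZeroClass M₀] [NoZeroDivisors M₀]
    [TopologicalSpace M₀] [ContinuousMul M₀] {c : M₀} (hc : c ≠ 0) :
    Tendsto (c * ·) (𝓝[≠] 0) (𝓝[≠] 0) := by
  have hmaps : Set.MapsTo (c * ·) ({0}ᶜ : Set M₀) {0}ᶜ := fun z (hz : z ≠ 0) => mul_ne_zero hc hz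
  simpa using ((continuous_const_mul c).continuousWithinAt (x := 0)).tendsto_nhdsWithin hmaps

theorem csinc_sub_sincPadeE_div_pow {n : ℕ} {z : ℂ} (hz : z ≠ 0) (hp : padeG n (I * z) ≠ 0)
    (hm : padeG n (-I * z) ≠ 0) :
    (csinc z - sincPadeE n z) / z ^ (2 * n) = (-1) ^ n / 2 *
      (padeRemainder n (I * z) / padeG n (-I * z) + padeRemainder n (-I * z) / padeG n (I * z)) := by
  have hsinc : csinc z = (exp (I * z) - exp (-I * z)) / (2 * I * z) := by
    rw [csinc, if_neg hz, Complex.sin]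
    field_simp
    ring_nf
    rw [I_sq]
    ring
  have hpow : (I * z) ^ (2 * n + 1) = (-1) ^ n * (I * z) * z ^ (2 * n) := by
    rw [pow_succ, pow_mul, mul_pow, I_sq]
    ring
  have hpow' : (-(I * z)) ^ (2 * n + 1) = -((-1) ^ n * (I * z) * z ^ (2 * n)) := by
    rw [(odd_two_mul_add_one n).neg_pow, hpow]
  rw [hsinc, sincPadeE, padeRemainder, padeRemainder]
  simp only [neg_mul, neg_neg] at hm ⊢
  rw [hpow, hpow']
  field_simp
  ring

theorem sincPade_error_limit_general (n : ℕ) :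
    Tendsto (fun z : ℂ => (csinc z - sincPadeE n z) / z ^ (2 * n))
      (nhdsWithin 0 {(0 : ℂ)}ᶜ)
      (nhds (((Nat.factorial n : ℂ)) ^ 2 /
        ((Nat.factorial (2 * n) : ℂ) * (Nat.factorial (2 * n + 1) : ℂ)))) := by
  have hG0 : padeG n 0 ≠ 0 := by simp [padeG_zero, Nat.factorial_ne_zero]
  have hG (c : ℂ) : Tendsto (fun z => padeG n (c * z)) (𝓝[≠] 0) (𝓝 (padeG n 0)) :=
    (((continuous_padeG n).comp (continuous_const_mul c)).tendsto' 0 _ (by simp)).mono_left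
      nhdsWithin_le_nhds
  have hR (c : ℂ) (hc : c ≠ 0) := (tendsto_padeRemainder n).comp (tendsto_const_mul_nhdsNE_zero hc)
  have hlim := (((hR I I_ne_zero).div (hG (-I)) hG0).add
    ((hR (-I) (neg_ne_zero.2 I_ne_zero)).div (hG I) hG0)).const_mul ((-1) ^ n / 2)
  convert hlim.congr' ?_ using 2
  · rw [padeG_zero]
    field_simp
    ring_nf
    rw [Even.neg_one_pow ⟨n, by ring⟩]
    ring
  · filter_upwards [self_mem_nhdsWithin, (hG I).eventually_ne hG0, (hG (-I)).eventually_ne hG0]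
      with z hz hp hm
    exact (csinc_sub_sincPadeE_div_pow hz hp hm).symm

/-- For `n ≥ 1`, the error `Ŝ_n(z) = sinc z - E_n(z)` satisfies
`lim_{z→0, z≠0} Ŝ_n(z)/z^{2n} = (n!)²/((2n)!(2n+1)!)`; in particular the error vanishes
to order `2n` at `z = 0`. -/
theorem sincPade_error_limit (n : ℕ) (hn : 1 ≤ n) :
    Tendsto (fun z : ℂ => (csinc z - sincPadeE n z) / z ^ (2 * n))
      (nhdsWithin 0 {(0 : ℂ)}ᶜ)
      (nhds (((Nat.factorial n : ℂ)) ^ 2 /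
        ((Nat.factorial (2 * n) : ℂ) * (Nat.factorial (2 * n + 1) : ℂ)))) :=
  sincPade_error_limit_general n
end

section
/- For every real number x, (sinc x)² = (1/8) ∫_{-2}^{0} (2k + 4)(e^{-ikx} + e^{ikx}) dk, where the integral is over the real variable k. (This is the inversion of the Fourier transform of sinc² and underlies the exponential-sum approximation of sinc²(A)v.) -/
open Complex intervalIntegral

/-- The unnormalized sinc function on the real line. -/
noncomputable def rsinc (x : ℝ) : ℝ := if x = 0 then 1 else Real.sin x / x

/-!
The integrand is `4 (k + 2) cos (k x)`, a tent function against a cosine. For `x ≠ 0`, the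
antiderivative `(k + a) sin (k x) / x + cos (k x) / x²` gives
`∫_{-a}^0 (k + a) cos (k x) dk = (1 - cos (a x)) / x² = 2 sin² (a x / 2) / x²`, which is
`a² / 2 · sinc² (a x / 2)`; at `x = 0` both sides equal `a² / 2`.
-/

theorem sq_mul_rsinc_sq (y : ℝ) : y ^ 2 * rsinc y ^ 2 = Real.sin y ^ 2 := by
  rcases eq_or_ne y 0 with rfl | hy
  · simp
  · rw [rsinc, if_neg hy]
    field_simp

section TentCosine

variable {a x : ℝ}

theorem hasDerivAt_add_mul_sin_div_add_cos_div_sq (hx : x ≠ 0) (k : ℝ) :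
    HasDerivAt (fun k => (k + a) * Real.sin (k * x) / x + Real.cos (k * x) / x ^ 2)
      ((k + a) * Real.cos (k * x)) k := by
  have hsin := (hasDerivAt_mul_const x).sin (x := k)
  have hcos := (hasDerivAt_mul_const x).cos (x := k)
  refine ((((hasDerivAt_id k).add_const a).mul hsin).div_const x |>.add
    (hcos.div_const (x ^ 2))).congr_deriv ?_
  simp only [id]
  field_simp
  ring

theorem integral_add_mul_cos_of_ne_zero (hx : x ≠ 0) :
    ∫ k in -a..0, (k + a) * Real.cos (k * x) = (1 - Real.cos (a * x)) / x ^ 2 := by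
  rw [integral_eq_sub_of_hasDerivAt (fun k _ => hasDerivAt_add_mul_sin_div_add_cos_div_sq hx k)
    ((by fun_prop : Continuous fun k => (k + a) * Real.cos (k * x)).intervalIntegrable _ _)]
  simp only [zero_add, zero_mul, Real.sin_zero, Real.cos_zero, mul_zero, zero_div, neg_add_cancel,
    neg_mul, Real.cos_neg]
  ring

theorem integral_add_mul_cos :
    ∫ k in -a..0, (k + a) * Real.cos (k * x) = a ^ 2 / 2 * rsinc (a * x / 2) ^ 2 := by
  rcases eq_or_ne x 0 with rfl | hx
  · simp only [mul_zero, Real.cos_zero, mul_one, zero_div, rsinc, if_true, one_pow,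
      integral_comp_add_right fun k => k, integral_id]
    ring
  · have hsq : a ^ 2 * rsinc (a * x / 2) ^ 2 = 4 / x ^ 2 * Real.sin (a * x / 2) ^ 2 := by
      rw [← sq_mul_rsinc_sq]
      field_simp
      ring
    have hcos : Real.cos (a * x) = 1 - 2 * Real.sin (a * x / 2) ^ 2 := by
      rw [← Real.cos_two_mul_eq_one_sub]
      ring_nf
    rw [integral_add_mul_cos_of_ne_zero hx, hcos, div_mul_eq_mul_div, hsq]
    ring

end TentCosine

/-- For every real `x`,
`(sinc x)² = (1/8) ∫_{-2}^{0} (2k + 4)(e^{-ikx} + e^{ikx}) dk`: inversion of the Fourier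
transform of `sinc²`, underlying the exponential-sum approximation of `sinc²(A)v`. -/
theorem rsinc_sq_eq_integral_exp (x : ℝ) :
    ((rsinc x : ℂ)) ^ 2 =
      (1 / 8) * ∫ k in (-2:ℝ)..0,
        (2 * (k:ℂ) + 4) * (Complex.exp (-Complex.I * k * x) + Complex.exp (Complex.I * k * x)) := by
  have hintegrand : ∀ k : ℝ,
      (2 * (k:ℂ) + 4) * (Complex.exp (-Complex.I * k * x) + Complex.exp (Complex.I * k * x)) =
        ((4 * ((k + 2) * Real.cos (k * x)) : ℝ) : ℂ) := by
    intro k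
    rw [show -I * k * x = -(k * x : ℂ) * I by ring, show I * k * x = (k * x : ℂ) * I by ring,
      add_comm (cexp _), ← two_cos]
    push_cast
    ring
  simp_rw [hintegrand]
  rw [intervalIntegral.integral_ofReal, intervalIntegral.integral_const_mul, integral_add_mul_cos,
    show (2 : ℝ) * x / 2 = x by ring]
  push_cast
  ring
end

section
/- For every real number k, the improper integral lim_{R→∞} ∫_{-R}^{R} sinc(r) e^{irk} dr exists and equals (π/2)(sgn(1-k) + sgn(1+k)), where sgn denotes the sign function (sgn 0 = 0). Equivalently, the Fourier transform (with normalization (1/√(2π)) ∫ sinc(r) e^{irk} dr) of sinc equals (1/2)√(π/2)(sgn(1-k) + sgn(1+k)). -/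
/-!
Splitting `e^{irk}` into even and odd parts and using `2 sin r cos kr = sin (1+k)r + sin (1-k)r`,
the integral over `[-R, R]` becomes `S((1+k)R) + S((1-k)R)` with `S(R) = ∫_0^R sinc`, so
everything reduces to the Dirichlet integral `S(R) → π/2`. Along `R = (2n+1)π/2` the substitution
`x = (2n+1)t` and `sin((2n+1)t) = sin t · (1 + 2 ∑_{k=1}^n cos 2kt)` give
`S(R) = π/2 + ∫_0^{π/2} sin((2n+1)t) (1/t - 1/sin t) dt`, whose last term tends to `0` by the
Riemann–Lebesgue lemma since `1/t - 1/sin t` is bounded; a general `R` is within `π/2` of such a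
point, and `|sinc x| ≤ 1/x` makes the difference negligible.
-/

open Complex Filter intervalIntegral Real

open MeasureTheory Set Topology
open scoped FourierTransform

theorem tendsto_integral_sin_mul_atTop {f : ℝ → ℝ} (hf : Integrable f) :
    Tendsto (fun c => ∫ t, Real.sin (c * t) * f t) atTop (𝓝 0) := by
  have hw : Tendsto (fun c : ℝ => -(c / (2 * π))) atTop (cocompact ℝ) :=
    (tendsto_neg_atTop_atBot.comp (tendsto_id.atTop_div_const (by positivity))).mono_right
      atBot_le_cocompact
  have hRL := (Complex.continuous_im.tendsto 0).comp
    ((Real.tendsto_integral_exp_smul_cocompact fun t => (f t : ℂ)).comp hw)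
  rw [zero_im] at hRL
  refine hRL.congr fun c => ?_
  have hexp (t : ℝ) : 𝐞 (-(t * -(c / (2 * π)))) • (f t : ℂ) = exp (↑(c * t) * I) * f t := by
    rw [Circle.smul_def, Real.fourierChar_apply]
    congr 3
    field_simp
  have hint : Integrable fun t : ℝ => exp (↑(c * t) * I) * f t :=
    hf.ofReal.bdd_mul (by fun_prop) (.of_forall fun t => (norm_exp_ofReal_mul_I _).le)
  simp only [Function.comp_apply, hexp]
  rw [← RCLike.im_eq_complex_im, ← integral_im hint]
  congr 1 with t
  rw [RCLike.im_eq_complex_im, im_mul_ofReal, exp_ofReal_mul_I_im]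

theorem tendsto_intervalIntegral_sin_mul_atTop {f : ℝ → ℝ} {a b : ℝ}
    (hf : IntervalIntegrable f volume a b) :
    Tendsto (fun c => ∫ t in a..b, Real.sin (c * t) * f t) atTop (𝓝 0) := by
  have hset {s : Set ℝ} (hs : MeasurableSet s) (hfs : IntegrableOn f s) :
      Tendsto (fun c => ∫ t in s, Real.sin (c * t) * f t) atTop (𝓝 0) := by
    refine (tendsto_integral_sin_mul_atTop (hfs.integrable_indicator hs)).congr fun c => ?_
    simp_rw [← MeasureTheory.integral_indicator hs, indicator_mul_right]
  have := (hset measurableSet_Ioc hf.1).sub (hset measurableSet_Ioc hf.2)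
  rwa [sub_zero] at this

theorem abs_inv_sub_inv_sin_le_one {t : ℝ} (ht₀ : 0 ≤ t) (ht : t ≤ π / 2) :
    |t⁻¹ - (Real.sin t)⁻¹| ≤ 1 := by
  rcases ht₀.eq_or_lt with rfl | ht₀
  · simp
  have hjordan := mul_le_sin ht₀.le ht
  have hsin : 0 < Real.sin t := lt_of_lt_of_le (by positivity) hjordan
  have hdiff : 0 ≤ t - Real.sin t := sub_nonneg.2 (sin_le ht₀.le)
  calc |t⁻¹ - (Real.sin t)⁻¹| = (t - Real.sin t) / (t * Real.sin t) := by
        rw [inv_sub_inv ht₀.ne' hsin.ne', abs_div, abs_of_nonpos (by linarith),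
          abs_of_pos (by positivity)]
        ring
    _ ≤ (t ^ 3 / 6) / (t * (2 / π * t)) := by
        gcongr
        linarith [sin_ge_sub_cube ht₀.le]
    _ = π * t / 12 := by field_simp; ring
    _ ≤ 1 := by nlinarith [pi_lt_d2, pi_pos]

theorem intervalIntegrable_inv_sub_inv_sin :
    IntervalIntegrable (fun t => t⁻¹ - (Real.sin t)⁻¹) volume 0 (π / 2) := by
  rw [intervalIntegrable_iff_integrableOn_Ioc_of_le (by positivity)]
  refine Measure.integrableOn_of_bounded (M := 1) measure_Ioc_lt_top.ne (by fun_prop) ?_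
  filter_upwards [ae_restrict_mem measurableSet_Ioc] with t ht
  exact abs_inv_sub_inv_sin_le_one ht.1.le ht.2

/-- `dirichletKernel n t = sin ((2n+1)t) / sin t`, the Dirichlet kernel `D_n` at `2t`. -/
noncomputable def dirichletKernel (n : ℕ) (t : ℝ) : ℝ :=
  1 + 2 * ∑ k ∈ Finset.range n, Real.cos (2 * (k + 1) * t)

theorem continuous_dirichletKernel (n : ℕ) : Continuous (dirichletKernel n) := by
  unfold dirichletKernel
  fun_prop

theorem sin_mul_dirichletKernel (n : ℕ) (t : ℝ) :
    Real.sin t * dirichletKernel n t = Real.sin ((2 * n + 1) * t) := by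
  induction n with
  | zero => simp [dirichletKernel]
  | succ n ih =>
    have hstep := Real.sin_sub_sin ((2 * (n + 1) + 1) * t) ((2 * n + 1) * t)
    rw [show ((2 * (n + 1) + 1) * t - (2 * n + 1) * t) / 2 = t by ring,
      show ((2 * (n + 1) + 1) * t + (2 * n + 1) * t) / 2 = 2 * (n + 1) * t by ring] at hstep
    simp only [dirichletKernel, Finset.sum_range_succ] at ih ⊢
    push_cast
    linear_combination ih - hstep

theorem integral_dirichletKernel (n : ℕ) : ∫ t in 0..π / 2, dirichletKernel n t = π / 2 := by
  have hcos (k : ℕ) : ∫ t in 0..π / 2, Real.cos (2 * (k + 1) * t) = 0 := by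
    have hk : (2 * (k + 1) : ℝ) ≠ 0 := by positivity
    rw [integral_comp_mul_left Real.cos hk, integral_cos, mul_zero, Real.sin_zero,
      show 2 * (k + 1) * (π / 2) = ((k + 1 : ℕ) : ℝ) * π by push_cast; ring, Real.sin_nat_mul_pi]
    simp
  simp only [dirichletKernel]
  rw [intervalIntegral.integral_add intervalIntegrable_const
      (Continuous.intervalIntegrable (by fun_prop) _ _),
    intervalIntegral.integral_const_mul,
    integral_finsetSum fun k _ => Continuous.intervalIntegrable (by fun_prop) _ _]
  simp [hcos]

theorem mul_sinc_mul_eq_dirichletKernel_add (n : ℕ) {t : ℝ} (ht₀ : 0 ≤ t) (ht : t < π) :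
    (2 * n + 1) * sinc ((2 * n + 1) * t) =
      dirichletKernel n t + Real.sin ((2 * n + 1) * t) * (t⁻¹ - (Real.sin t)⁻¹) := by
  rcases ht₀.eq_or_lt with rfl | ht₀
  · simp [dirichletKernel]
    ring
  have hsin : Real.sin t ≠ 0 := (sin_pos_of_pos_of_lt_pi ht₀ ht).ne'
  rw [sinc_of_ne_zero (by positivity), ← sin_mul_dirichletKernel]
  field_simp
  ring

theorem integral_sinc_odd_mul_pi_div_two (n : ℕ) :
    ∫ x in 0..(2 * n + 1) * (π / 2), sinc x =
      π / 2 + ∫ t in 0..π / 2, Real.sin ((2 * n + 1) * t) * (t⁻¹ - (Real.sin t)⁻¹) := by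
  calc ∫ x in 0..(2 * n + 1) * (π / 2), sinc x
      = ∫ t in 0..π / 2, (2 * n + 1) * sinc ((2 * n + 1) * t) := by
        rw [intervalIntegral.integral_const_mul, mul_integral_comp_mul_left, mul_zero]
    _ = ∫ t in 0..π / 2,
          dirichletKernel n t + Real.sin ((2 * n + 1) * t) * (t⁻¹ - (Real.sin t)⁻¹) := by
        refine integral_congr fun t ht => ?_
        rw [uIcc_of_le (by positivity)] at ht
        exact mul_sinc_mul_eq_dirichletKernel_add n ht.1 (by linarith [ht.2, pi_pos])
    _ = π / 2 + ∫ t in 0..π / 2, Real.sin ((2 * n + 1) * t) * (t⁻¹ - (Real.sin t)⁻¹) := by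
        rw [intervalIntegral.integral_add ((continuous_dirichletKernel n).intervalIntegrable _ _)
          (intervalIntegrable_inv_sub_inv_sin.continuousOn_mul (by fun_prop)),
          integral_dirichletKernel]

theorem tendsto_integral_sinc_odd_mul_pi_div_two :
    Tendsto (fun n : ℕ => ∫ x in 0..(2 * n + 1) * (π / 2), sinc x) atTop (𝓝 (π / 2)) := by
  have hodd : Tendsto (fun n : ℕ => (2 * n + 1 : ℝ)) atTop atTop :=
    tendsto_atTop_add_const_right _ _ (tendsto_natCast_atTop_atTop.const_mul_atTop two_pos)
  have hRL := (tendsto_intervalIntegral_sin_mul_atTop intervalIntegrable_inv_sub_inv_sin).comp hodd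
  simpa [integral_sinc_odd_mul_pi_div_two] using (tendsto_const_nhds (x := π / 2)).add hRL

theorem abs_sinc_le_inv_abs {x : ℝ} (hx : x ≠ 0) : |sinc x| ≤ |x|⁻¹ := by
  rw [sinc_of_ne_zero hx, abs_div, div_eq_mul_inv]
  exact mul_le_of_le_one_left (by positivity) (abs_sin_le_one x)

theorem abs_integral_sinc_sub_le {a b c : ℝ} (hc : 0 < c) (ha : c ≤ a) (hb : c ≤ b) :
    |(∫ x in 0..b, sinc x) - ∫ x in 0..a, sinc x| ≤ |b - a| / c := by
  rw [integral_interval_sub_left (continuous_sinc.intervalIntegrable _ _)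
    (continuous_sinc.intervalIntegrable _ _), div_eq_inv_mul, ← Real.norm_eq_abs]
  refine intervalIntegral.norm_integral_le_of_norm_le_const fun x hx => ?_
  have hcx : c < x := (le_min ha hb).trans_lt hx.1
  rw [Real.norm_eq_abs]
  calc |sinc x| ≤ |x|⁻¹ := abs_sinc_le_inv_abs (hc.trans hcx).ne'
    _ ≤ c⁻¹ := by rw [abs_of_pos (hc.trans hcx)]; exact inv_anti₀ hc hcx.le

theorem tendsto_integral_sinc : Tendsto (fun R => ∫ x in 0..R, sinc x) atTop (𝓝 (π / 2)) := by
  set n : ℝ → ℕ := fun R => ⌊R / π⌋₊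
  set x : ℝ → ℝ := fun R => (2 * n R + 1) * (π / 2)
  have hn : Tendsto n atTop atTop :=
    tendsto_nat_floor_atTop.comp (tendsto_id.atTop_div_const pi_pos)
  have hdist (R : ℝ) (hR : 0 ≤ R) : |R - x R| ≤ π / 2 := by
    simp only [x, n]
    have h₁ := (le_div_iff₀ pi_pos).1 (Nat.floor_le (div_nonneg hR pi_pos.le))
    have h₂ := (div_lt_iff₀ pi_pos).1 (Nat.lt_floor_add_one (R / π))
    rw [abs_le]
    constructor <;> linarith
  have hbound : ∀ᶠ R in atTop,
      ‖(∫ y in 0..R, sinc y) - ∫ y in 0..x R, sinc y‖ ≤ (π / 2) / (R - π / 2) := by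
    filter_upwards [eventually_gt_atTop (π / 2)] with R hR
    have hxR := abs_le.1 (hdist R (by linarith [pi_pos]))
    calc _ ≤ |R - x R| / (R - π / 2) :=
          abs_integral_sinc_sub_le (by linarith) (by linarith) (by linarith)
      _ ≤ (π / 2) / (R - π / 2) :=
          div_le_div_of_nonneg_right (hdist R (by linarith [pi_pos])) (by linarith)
  have hgap : Tendsto (fun R => (∫ y in 0..R, sinc y) - ∫ y in 0..x R, sinc y) atTop (𝓝 0) :=
    squeeze_zero_norm' hbound
      (tendsto_const_nhds.div_atTop (tendsto_atTop_add_const_right _ _ tendsto_id))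
  have hsum := (tendsto_integral_sinc_odd_mul_pi_div_two.comp hn).add hgap
  rw [add_zero] at hsum
  exact hsum.congr fun R => add_sub_cancel _ _

theorem integral_zero_neg_of_even {E : Type*} [NormedAddCommGroup E] [NormedSpace ℝ E]
    {f : ℝ → E} (hf : ∀ x, f (-x) = f x) (R : ℝ) :
    ∫ x in 0..-R, f x = -∫ x in 0..R, f x := by
  have h := integral_comp_neg (a := 0) (b := R) f
  simp only [hf, neg_zero] at h
  rw [h, integral_symm]

theorem integral_mul_sinc_mul (a R : ℝ) :
    ∫ r in 0..R, a * sinc (a * r) = ∫ x in 0..a * R, sinc x := by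
  rw [intervalIntegral.integral_const_mul, mul_integral_comp_mul_left, mul_zero]

theorem tendsto_integral_mul_sinc_mul (a : ℝ) :
    Tendsto (fun R => ∫ r in 0..R, a * sinc (a * r)) atTop (𝓝 (Real.sign a * (π / 2))) := by
  simp_rw [integral_mul_sinc_mul]
  rcases lt_trichotomy a 0 with ha | rfl | ha
  · have h := (tendsto_integral_sinc.comp (tendsto_id.const_mul_atTop (neg_pos.2 ha))).neg
    rw [Real.sign_of_neg ha, neg_one_mul]
    refine h.congr fun R => ?_
    rw [Function.comp_apply, id, ← integral_zero_neg_of_even sinc_neg, neg_mul, neg_neg]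
  · simp
  · rw [Real.sign_of_pos ha, one_mul]
    exact tendsto_integral_sinc.comp (tendsto_id.const_mul_atTop ha)

theorem integral_neg_left_eq_integral_add_comp_neg {E : Type*} [NormedAddCommGroup E]
    [NormedSpace ℝ E] {f : ℝ → E} {R : ℝ} (hf : IntervalIntegrable f volume (-R) R) :
    ∫ x in -R..R, f x = ∫ x in 0..R, (f x + f (-x)) := by
  have h0 : (0 : ℝ) ∈ uIcc (-R) R := by
    rcases le_total 0 R with h | h
    · exact mem_uIcc_of_le (by linarith) h
    · exact mem_uIcc_of_ge h (by linarith)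
  have hneg : IntervalIntegrable f volume (-R) 0 :=
    hf.mono_set (uIcc_subset_uIcc left_mem_uIcc h0)
  have hpos : IntervalIntegrable f volume 0 R := hf.mono_set (uIcc_subset_uIcc h0 right_mem_uIcc)
  have hcomp : IntervalIntegrable (fun x => f (-x)) volume 0 R := by
    simpa using ((IntervalIntegrable.iff_comp_neg (a := -R) (b := 0) (f := f)).1 hneg).symm
  rw [intervalIntegral.integral_add hpos hcomp, integral_comp_neg, neg_zero,
    ← integral_add_adjacent_intervals hneg hpos, add_comm]

theorem mul_sinc_mul {r : ℝ} (a : ℝ) (hr : r ≠ 0) : a * sinc (a * r) = Real.sin (a * r) / r := by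
  rcases eq_or_ne a 0 with rfl | ha
  · simp
  · rw [sinc_of_ne_zero (mul_ne_zero ha hr)]
    field_simp

theorem two_mul_sinc_mul_cos (k r : ℝ) :
    2 * (sinc r * Real.cos (k * r)) =
      (1 + k) * sinc ((1 + k) * r) + (1 - k) * sinc ((1 - k) * r) := by
  rcases eq_or_ne r 0 with rfl | hr
  · simp
    ring
  rw [mul_sinc_mul _ hr, mul_sinc_mul _ hr, sinc_of_ne_zero hr, ← add_div,
    show (1 + k) * r = r + k * r by ring, show (1 - k) * r = r - k * r by ring,
    Real.sin_add, Real.sin_sub]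
  ring

theorem rsinc_eq_sinc : rsinc = sinc := rfl

/-- For every real `k`, the improper integral `lim_{R→∞} ∫_{-R}^{R} sinc(r) e^{irk} dr`
exists and equals `(π/2)(sgn(1-k) + sgn(1+k))`, where `sgn` is the sign function with
`sgn 0 = 0`.  (Fourier transform of the sinc function.) -/
theorem fourier_transform_rsinc (k : ℝ) :
    Tendsto (fun R : ℝ => ∫ r in (-R)..R, (rsinc r : ℂ) * Complex.exp (Complex.I * r * k))
      atTop
      (nhds ((Real.pi / 2 * (Real.sign (1 - k) + Real.sign (1 + k)) : ℝ) : ℂ)) := by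
  rw [rsinc_eq_sinc]
  have hsymm (r : ℝ) : (sinc r : ℂ) * exp (I * r * k) + (sinc (-r) : ℂ) * exp (I * ↑(-r) * k) =
      ↑((1 + k) * sinc ((1 + k) * r) + (1 - k) * sinc ((1 - k) * r)) := by
    rw [← two_mul_sinc_mul_cos, sinc_neg]
    push_cast
    rw [← mul_add, mul_left_comm, two_cos]
    ring_nf
  rw [show π / 2 * (Real.sign (1 - k) + Real.sign (1 + k)) =
    Real.sign (1 + k) * (π / 2) + Real.sign (1 - k) * (π / 2) by ring]
  refine ((continuous_ofReal.tendsto _).comp ((tendsto_integral_mul_sinc_mul (1 + k)).add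
    (tendsto_integral_mul_sinc_mul (1 - k)))).congr fun R => ?_
  rw [Function.comp_apply,
    ← intervalIntegral.integral_add (Continuous.intervalIntegrable (by fun_prop) _ _)
      (Continuous.intervalIntegrable (by fun_prop) _ _),
    ← intervalIntegral.integral_ofReal]
  simp_rw [← hsymm]
  exact (integral_neg_left_eq_integral_add_comp_neg
    (Continuous.intervalIntegrable (by fun_prop) _ _)).symm
end
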